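/- Under the support hypotheses below, for every function g : X → ℂ and every n ∈ ℕ one has supp(T_n(g)) ∩ C ⊆ supp(g) ∩ C. -/

import Mathlib

/-- The operators `T_n` of the star product reduction: `T_0 = id` and
`T_n(f) = -∑_{k=1}^{n} T_{n-k}(M_k(p_J(f), J))` for `n ≥ 1`. -/
noncomputable def Tred {A : Type*} [AddCommGroup A] (J : A) (pJ : A → A)
    (M : ℕ → A → A → A) : ℕ → A → A
  | 0, f => f
  | (n+1), f =>
      -∑ k ∈ (Finset.range (n+1)).attach,
        Tred J pJ M k.1 (M (n+1-k.1) (pJ f) J)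
  termination_by n _ => n
  decreasing_by
    have := k.2
    simp only [Finset.mem_range] at this
    omega

/-!
Strong induction on `n`: a point of `C` in the support of `T_{n+1} g` lies in the support of some
`T_k (M_{n+1-k}(p_J g, J))` with `k ≤ n`, hence (induction) in that of `M_{n+1-k}(p_J g, J)`, hence
in that of `p_J g`, and, being in `C`, in that of `g`.
-/

open Set

section Unfold

variable {A : Type*} [AddCommGroup A] (J : A) (pJ : A → A) (M : ℕ → A → A → A)

theorem Tred_zero (f : A) : Tred J pJ M 0 f = f := by
  rw [Tred]

theorem Tred_succ (n : ℕ) (f : A) :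
    Tred J pJ M (n + 1) f = -∑ k ∈ Finset.range (n + 1), Tred J pJ M k (M (n + 1 - k) (pJ f) J) := by
  rw [Tred, Finset.sum_attach (Finset.range (n + 1)) fun k => Tred J pJ M k (M (n + 1 - k) (pJ f) J)]

end Unfold

theorem tsupport_finset_sum_subset {X α ι : Type*} [TopologicalSpace X] [AddCommMonoid α]
    (s : Finset ι) (f : ι → X → α) :
    tsupport (∑ i ∈ s, f i) ⊆ ⋃ i ∈ s, tsupport (f i) := by
  simp only [tsupport, ← Finset.closure_biUnion]
  rw [Finset.sum_fn]
  exact closure_mono (s.support_sum f)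

theorem tsupport_Tred_inter_subset {X α : Type*} [TopologicalSpace X] [AddCommGroup α]
    {J : X → α} {pJ : (X → α) → X → α} {M : ℕ → (X → α) → (X → α) → X → α} {C : Set X}
    (hpJ : ∀ f, tsupport (pJ f) ∩ C ⊆ tsupport f)
    (hM : ∀ k, 1 ≤ k → ∀ f, tsupport (M k f J) ⊆ tsupport f) (n : ℕ) (g : X → α) :
    tsupport (Tred J pJ M n g) ∩ C ⊆ tsupport g := by
  induction n using Nat.strong_induction_on generalizing g with
  | _ n ih =>
    cases n with
    | zero => simpa only [Tred_zero] using inter_subset_left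
    | succ n =>
      rintro x ⟨hx, hxC⟩
      rw [Tred_succ, tsupport_neg] at hx
      obtain ⟨k, hk, hxk⟩ := mem_iUnion₂.mp (tsupport_finset_sum_subset _ _ hx)
      have hkn : k < n + 1 := Finset.mem_range.mp hk
      exact hpJ g ⟨hM _ (by omega) _ (ih k hkn _ ⟨hxk, hxC⟩), hxC⟩

theorem Tred_support_subset
    {X : Type*} [TopologicalSpace X]
    (J : X → ℂ)
    (pJ : (X → ℂ) →ₗ[ℂ] (X → ℂ))
    (hpJ : ∀ f : X → ℂ,
      tsupport (pJ f) ∩ {x | J x = 0} ⊆ tsupport f ∩ {x | J x = 0})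
    (M : ℕ → (X → ℂ) →ₗ[ℂ] (X → ℂ) →ₗ[ℂ] (X → ℂ))
    (hM : ∀ k, 1 ≤ k → ∀ f g : X → ℂ,
      tsupport (M k f g) ⊆ tsupport f ∩ tsupport g) :
    ∀ (g : X → ℂ) (n : ℕ),
      tsupport (Tred J (pJ ·) (fun k a b => M k a b) n g) ∩ {x | J x = 0}
        ⊆ tsupport g ∩ {x | J x = 0} := by
  intro g n
  have hpJ' : ∀ f, tsupport (pJ f) ∩ {x | J x = 0} ⊆ tsupport f :=
    fun f => (hpJ f).trans inter_subset_left
  have hM' : ∀ k, 1 ≤ k → ∀ f, tsupport (M k f J) ⊆ tsupport f :=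
    fun k hk f => (hM k hk f J).trans inter_subset_left
  exact subset_inter (tsupport_Tred_inter_subset hpJ' hM' n g) inter_subset_right
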